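/- Consider the twice-repeated 3x3 symmetric game with strategies {C, D, E} and stage payoffs u(C,C)=(4,4), u(C,D)=(0,0), u(C,E)=(0,5), u(D,C)=(0,0), u(D,D)=(1,1), u(D,E)=(0,0), u(E,C)=(5,0), u(E,D)=(0,0), u(E,E)=(3,3), with no discounting. The strategy profile in which both players play C in period 1, play E in period 2 if (C,C) occurred, and play D in period 2 otherwise, is a subgame perfect equilibrium but is not a credible equilibrium. -/

import Mathlib

/-!  A formal model of multi-stage games (Ismail, "Credible equilibrium").

A multi-stage game `G = (G^1, …, G^T)` is modeled by stage strategy spaces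
`A t i` (possibly mixed strategies) for each stage `t` and player `i`, stage
payoff functions `u i t`, and a discount factor `δ`; a finite horizon `T` is
the special case where stage payoffs vanish from stage `T` on.  A subgame is
identified by a stage `k` together with a history (a path, of which only the
first `k` entries matter); two subgames are equivalent iff they start at the
same stage.  -/

namespace MSG

variable {ι : Type}

/-- A path of play: an action profile at every stage. -/
abbrev PlayPath (A : ℕ → ι → Type) := ∀ t, ∀ i, A t i

/-- A strategy of player `i`: an action at every stage `t` as a function of the
history, depending only on play before stage `t`. -/
structure PStrat (A : ℕ → ι → Type) (i : ι) where
  act : ∀ t, PlayPath A → A t i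
  adapted : ∀ t (p q : PlayPath A), (∀ s, s < t → p s = q s) → act t p = act t q

/-- A strategy profile. -/
abbrev Profile (A : ℕ → ι → Type) := ∀ i, PStrat A i

/-- The play induced by profile `σ` in the subgame starting at stage `k` after
history `h`, computed up to stage `n`. -/
noncomputable def outcomeUpTo (A : ℕ → ι → Type) (σ : Profile A) (k : ℕ) (h : PlayPath A) :
    ℕ → PlayPath A
  | 0 => h
  | t + 1 =>
    Function.update (outcomeUpTo A σ k h t) t
      (if t < k then h t else fun i => (σ i).act t (outcomeUpTo A σ k h t))

/-- The path of play induced by `σ` from the subgame `(k, h)`. -/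
noncomputable def outcome (A : ℕ → ι → Type) (σ : Profile A) (k : ℕ) (h : PlayPath A) :
    PlayPath A :=
  fun t => outcomeUpTo A σ k h (t + 1) t

/-- Player `i`'s discounted payoff in the subgame starting at stage `k` after
history `h` under profile `σ`. -/
noncomputable def subPayoff (A : ℕ → ι → Type) (u : ι → ∀ t, (∀ i, A t i) → ℝ) (δ : ℝ)
    (σ : Profile A) (k : ℕ) (h : PlayPath A) (i : ι) : ℝ :=
  ∑' t : ℕ, δ ^ t * u i (k + t) (outcome A σ k h (k + t))

/-- `σ` restricted to the subgame `(k, h)` is a Nash equilibrium. -/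
def NashFrom [DecidableEq ι] (A : ℕ → ι → Type) (u : ι → ∀ t, (∀ i, A t i) → ℝ) (δ : ℝ)
    (σ : Profile A) (k : ℕ) (h : PlayPath A) : Prop :=
  ∀ i (τ : PStrat A i),
    subPayoff A u δ (Function.update σ i τ) k h i ≤ subPayoff A u δ σ k h i

/-- Subgame perfect equilibrium: Nash in every subgame. -/
def SPE [DecidableEq ι] (A : ℕ → ι → Type) (u : ι → ∀ t, (∀ i, A t i) → ℝ) (δ : ℝ)
    (σ : Profile A) : Prop :=
  ∀ k h, NashFrom A u δ σ k h

/-- Replace the first `k` stages of `p` by the history `h`. -/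
def splice (A : ℕ → ι → Type) (k : ℕ) (h p : PlayPath A) : PlayPath A :=
  fun s => if s < k then h s else p s

/-- Player `i`'s strategy `σi` has the same restriction to the equivalent
subgames `(k, h)` and `(k, h')`. -/
def SameRestriction (A : ℕ → ι → Type) {i : ι} (σi : PStrat A i) (k : ℕ)
    (h h' : PlayPath A) : Prop :=
  ∀ t, k ≤ t → ∀ p : PlayPath A, σi.act t (splice A k h p) = σi.act t (splice A k h' p)

/-- Credible equilibrium: an SPE such that whenever a player's strategy differs
on two equivalent subgames, her payoffs in those subgames coincide. -/
def Credible [DecidableEq ι] (A : ℕ → ι → Type) (u : ι → ∀ t, (∀ i, A t i) → ℝ) (δ : ℝ)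
    (σ : Profile A) : Prop :=
  SPE A u δ σ ∧ ∀ k (h h' : PlayPath A) i, ¬ SameRestriction A (σ i) k h h' →
    subPayoff A u δ σ k h i = subPayoff A u δ σ k h' i

end MSG

namespace MSG

/-- The three actions of the symmetric 3×3 stage game. -/
inductive Act3 : Type
  | C | D | E
deriving DecidableEq

/-- Stage payoff to a player who plays `a` against `b`: `u(C,C)=4`,
`u(C,D)=0`, `u(C,E)=0`, `u(D,C)=0`, `u(D,D)=1`, `u(D,E)=0`, `u(E,C)=5`,
`u(E,D)=0`, `u(E,E)=3`. -/
def pay3 : Act3 → Act3 → ℝ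
  | .C, .C => 4 | .C, .D => 0 | .C, .E => 0
  | .D, .C => 0 | .D, .D => 1 | .D, .E => 0
  | .E, .C => 5 | .E, .D => 0 | .E, .E => 3

/-- Payoffs of the twice-repeated game (two players indexed by `Bool`,
stages `0` and `1`, no payoff afterwards). -/
def twiceU : Bool → ∀ _ : ℕ, (Bool → Act3) → ℝ :=
  fun i t p => if t < 2 then pay3 (p i) (p (!i)) else 0

/-- The profile: both players play `C` in period 1; in period 2 they play `E`
if `(C,C)` occurred in period 1 and `D` otherwise. -/
def ccThenEorD : Profile (fun (_ : ℕ) (_ : Bool) => Act3) :=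
  fun _ =>
    { act := fun t h =>
        if t = 0 then Act3.C
        else if ∀ j, h 0 j = Act3.C then Act3.E else Act3.D
      adapted := by
        intro t p q hpq
        cases t with
        | zero => rfl
        | succ t => have h0 : p 0 = q 0 := hpq 0 (Nat.succ_pos t); simp [h0] }

end MSG

/-! Only stages 0 and 1 pay. A subgame starting at stage 1 is therefore a one-shot game, in which
the profile prescribes one of the stage equilibria (E,E) or (D,D). From stage 0, a player who leaves
C is punished with (D,D) and earns at most 5 + 1 < 4 + 3. Credibility fails at stage 1: the
strategies after (C,C) and after (D,D) differ, while the continuation payoffs there are 3 and 1. -/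

namespace MSG

section Outcome

variable {ι : Type} (A : ℕ → ι → Type) (σ : Profile A) (k : ℕ) (h : PlayPath A)

theorem outcomeUpTo_of_le {n : ℕ} (hn : n ≤ k) : outcomeUpTo A σ k h n = h := by
  induction n with
  | zero => rfl
  | succ n ih => rw [outcomeUpTo, ih (by omega), if_pos (by omega), Function.update_eq_self]

theorem outcome_self : outcome A σ k h k = fun i => (σ i).act k h := by
  rw [outcome, outcomeUpTo, outcomeUpTo_of_le A σ k h le_rfl, if_neg (lt_irrefl k),
    Function.update_self]

theorem outcome_succ_self :
    outcome A σ k h (k + 1) =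
      fun i => (σ i).act (k + 1) (Function.update h k (outcome A σ k h k)) := by
  rw [outcome, outcomeUpTo, if_neg (by omega), Function.update_self, outcomeUpTo,
    outcomeUpTo_of_le A σ k h le_rfl, if_neg (lt_irrefl k), outcome_self]

theorem subPayoff_eq_sum_range {u : ι → ∀ t, (∀ i, A t i) → ℝ} {T : ℕ}
    (hu : ∀ i t a, T ≤ t → u i t a = 0) (δ : ℝ) (i : ι) :
    subPayoff A u δ σ k h i =
      ∑ t ∈ Finset.range (T - k), δ ^ t * u i (k + t) (outcome A σ k h (k + t)) := by
  refine tsum_eq_sum fun t ht => ?_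
  rw [hu i _ _ (by simp at ht; omega), mul_zero]

end Outcome

theorem twiceU_eq_zero {t : ℕ} (ht : 2 ≤ t) (i : Bool) (p : Bool → Act3) : twiceU i t p = 0 :=
  if_neg (by omega)

theorem pay3_le_E_E (a : Act3) : pay3 a .E ≤ pay3 .E .E := by
  cases a <;> norm_num [pay3]

theorem pay3_le_D_D (a : Act3) : pay3 a .D ≤ pay3 .D .D := by
  cases a <;> norm_num [pay3]

theorem pay3_C_add_pay3_punish_le (a b : Act3) :
    pay3 a .C + pay3 b (if a = .C then .E else .D) ≤ pay3 .C .C + pay3 .E .E := by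
  cases a <;> cases b <;> simp [pay3] <;> norm_num

section TwiceRepeated

variable (σ : Profile (fun (_ : ℕ) (_ : Bool) => Act3))
  (h : PlayPath (fun (_ : ℕ) (_ : Bool) => Act3)) (i : Bool)

theorem subPayoff_twiceU_of_two_le {k : ℕ} (hk : 2 ≤ k) :
    subPayoff _ twiceU 1 σ k h i = 0 := by
  rw [subPayoff_eq_sum_range _ σ k h (fun i _ p ht => twiceU_eq_zero ht i p),
    Nat.sub_eq_zero_of_le hk, Finset.sum_range_zero]

theorem subPayoff_twiceU_one :
    subPayoff _ twiceU 1 σ 1 h i = pay3 ((σ i).act 1 h) ((σ !i).act 1 h) := by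
  rw [subPayoff_eq_sum_range _ σ 1 h (fun i _ p ht => twiceU_eq_zero ht i p)]
  simp [twiceU, outcome_self]

theorem subPayoff_twiceU_zero :
    subPayoff _ twiceU 1 σ 0 h i =
      pay3 ((σ i).act 0 h) ((σ !i).act 0 h) +
        pay3 ((σ i).act 1 (Function.update h 0 fun j => (σ j).act 0 h))
          ((σ !i).act 1 (Function.update h 0 fun j => (σ j).act 0 h)) := by
  rw [subPayoff_eq_sum_range _ σ 0 h (fun i _ p ht => twiceU_eq_zero ht i p)]
  simp [Finset.sum_range_succ, twiceU, outcome_self, outcome_succ_self]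

theorem nashFrom_twiceU_of_two_le {k : ℕ} (hk : 2 ≤ k) : NashFrom _ twiceU 1 σ k h := by
  intro i τ
  rw [subPayoff_twiceU_of_two_le _ _ _ hk, subPayoff_twiceU_of_two_le _ _ _ hk]

end TwiceRepeated

theorem ccThenEorD_act_zero (j : Bool) (p : PlayPath (fun (_ : ℕ) (_ : Bool) => Act3)) :
    (ccThenEorD j).act 0 p = .C := rfl

theorem ccThenEorD_act_one (j : Bool) (p : PlayPath (fun (_ : ℕ) (_ : Bool) => Act3)) :
    (ccThenEorD j).act 1 p = if ∀ j, p 0 j = .C then .E else .D := rfl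

theorem nashFrom_ccThenEorD_zero (h : PlayPath (fun (_ : ℕ) (_ : Bool) => Act3)) :
    NashFrom _ twiceU 1 ccThenEorD 0 h := by
  intro i τ
  have hopp : Function.update ccThenEorD i τ (!i) = ccThenEorD (!i) :=
    Function.update_of_ne (Bool.not_ne_self i) _ _
  rw [subPayoff_twiceU_zero, subPayoff_twiceU_zero]
  simp only [hopp, Function.update_self, ccThenEorD_act_zero, ccThenEorD_act_one,
    Bool.forall_bool' i, and_true]
  simpa using pay3_C_add_pay3_punish_le _ _

theorem nashFrom_ccThenEorD_one (h : PlayPath (fun (_ : ℕ) (_ : Bool) => Act3)) :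
    NashFrom _ twiceU 1 ccThenEorD 1 h := by
  intro i τ
  have hopp : Function.update ccThenEorD i τ (!i) = ccThenEorD (!i) :=
    Function.update_of_ne (Bool.not_ne_self i) _ _
  rw [subPayoff_twiceU_one, subPayoff_twiceU_one, hopp, ccThenEorD_act_one, ccThenEorD_act_one]
  split_ifs
  · exact pay3_le_E_E _
  · exact pay3_le_D_D _

theorem spe_ccThenEorD : SPE (fun _ _ => Act3) twiceU 1 ccThenEorD
  | 0, h => nashFrom_ccThenEorD_zero h
  | 1, h => nashFrom_ccThenEorD_one h
  | _ + 2, h => nashFrom_twiceU_of_two_le _ h (by omega)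

end MSG

open MSG in
/-- In the twice-repeated 3×3 game above (no discounting),
the profile "play `(C,C)` in period 1; play `(E,E)` in period 2 if `(C,C)`
occurred and `(D,D)` otherwise" is a subgame perfect equilibrium but not a
credible equilibrium. -/
theorem twice_repeated_SPE_not_credible :
    SPE (fun _ _ => Act3) twiceU 1 ccThenEorD ∧
      ¬ Credible (fun _ _ => Act3) twiceU 1 ccThenEorD := by
  refine ⟨spe_ccThenEorD, fun ⟨_, hcred⟩ => ?_⟩
  have hdiffer : ¬ SameRestriction _ (ccThenEorD true) 1 (fun _ _ => .C) (fun _ _ => .D) :=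
    fun hsame => by simpa [splice, ccThenEorD_act_one] using hsame 1 le_rfl (fun _ _ => .C)
  have hpay := hcred 1 _ _ true hdiffer
  simp [subPayoff_twiceU_one, ccThenEorD_act_one, pay3] at hpay
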